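/- arXiv:2605.24258 — 4 statements merged into one kernel-verified Lean document; each statement's English description precedes it below -/
import Mathlib

section
/- Let ℓ ≤ k/2 and let S be a monotone ℓ-in-k-SAT instance. Construct S′ over the variables of S together with fresh variables x₁,…,x_{ℓ+1} and y₁,…,y_{k−ℓ}: for each clause c of S and each i ∈ {1,…,ℓ+1}, S′ has the clause c ∪ {x_i}; in addition S′ has the clause {x₁,…,x_{ℓ+1}, y₁,…,y_{k−ℓ}}. Then S has an assignment making exactly ℓ variables true in each clause if and only if S′ has an assignment making exactly ℓ variables true in each clause. -/
lemma card_filter_fin_lt (n m : ℕ) (h : m ≤ n) :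
    (Finset.univ.filter (fun j : Fin n => (j : ℕ) < m)).card = m := by
  have : (Finset.univ.filter (fun j : Fin n => (j : ℕ) < m)) =
      (Finset.range m).attachFin (fun x hx => lt_of_lt_of_le (Finset.mem_range.mp hx) h) := by
    ext a
    simp [Finset.mem_attachFin, Finset.mem_range]
  rw [this, Finset.card_attachFin, Finset.card_range]


lemma card_filter_sum {α β : Type*} [Fintype α] [Fintype β] [DecidableEq α] [DecidableEq β] (p : α ⊕ β → Bool) :
    ((Finset.univ : Finset (α ⊕ β)).filter (fun a => p a = true)).card =
      (Finset.univ.filter (fun a : α => p (Sum.inl a) = true)).card +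
      (Finset.univ.filter (fun b : β => p (Sum.inr b) = true)).card := by
  rw [← Finset.univ_disjSum_univ, ← Finset.map_inl_disjUnion_map_inr,
    Finset.disjUnion_eq_union, Finset.filter_union,
    Finset.card_union_of_disjoint, Finset.filter_map, Finset.filter_map,
    Finset.card_map, Finset.card_map]
  · rfl
  · exact Finset.disjoint_filter_filter (Finset.disjoint_map_inl_map_inr _ _)

/-- For `1 ≤ ℓ`, `2ℓ ≤ k`, the monotone ℓ-in-k instance `S` is satisfiable
(each clause exactly ℓ true) iff the instance `S'` is, where `S'` lives on the variables of
`S` together with fresh variables `x₁,…,x_{ℓ+1}` (modelled as `Sum.inr (Sum.inl i)`) and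
`y₁,…,y_{k-ℓ}` (modelled as `Sum.inr (Sum.inr j)`), has clauses `c ∪ {xᵢ}` for each clause
`c` of `S` and each `i`, and additionally the clause `{x₁,…,x_{ℓ+1},y₁,…,y_{k-ℓ}}`. -/
theorem padding_transfer {V : Type*} [DecidableEq V] (k ℓ : ℕ)
    (hℓ : 1 ≤ ℓ) (hk : 2 * ℓ ≤ k)
    (C : Finset (Finset V)) (hcard : ∀ c ∈ C, c.card = k) :
    (∃ σ : V → Bool, ∀ c ∈ C, (c.filter (fun v => σ v = true)).card = ℓ) ↔
    (∃ τ : V ⊕ (Fin (ℓ + 1) ⊕ Fin (k - ℓ)) → Bool,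
      (∀ c ∈ C, ∀ i : Fin (ℓ + 1),
        ((insert (Sum.inr (Sum.inl i) : V ⊕ (Fin (ℓ + 1) ⊕ Fin (k - ℓ)))
            (c.image Sum.inl)).filter (fun v => τ v = true)).card = ℓ) ∧
      (((Finset.univ.image (Sum.inr : (Fin (ℓ + 1) ⊕ Fin (k - ℓ)) →
            V ⊕ (Fin (ℓ + 1) ⊕ Fin (k - ℓ)))).filter (fun v => τ v = true)).card = ℓ)) := by
  constructor
  · rintro ⟨σ, hσ⟩
    refine ⟨Sum.elim σ (Sum.elim (fun _ => false) (fun j => decide ((j : ℕ) < ℓ))), ?_, ?_⟩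
    · intro c hc i
      rw [Finset.filter_insert, if_neg (by simp), Finset.filter_image,
        Finset.card_image_of_injective _ Sum.inl_injective]
      convert hσ c hc using 2
      exact Finset.filter_congr (fun _ _ => by simp)
    · rw [Finset.filter_image, Finset.card_image_of_injective _ Sum.inr_injective]
      rw [card_filter_sum]
      simp only [Sum.elim_inr, Sum.elim_inl, Sum.elim_inr]
      simp only [decide_eq_true_eq, Bool.false_eq_true, Finset.filter_false,
        Finset.card_empty, zero_add]
      rw [card_filter_fin_lt _ _ (by omega)]
  · rintro ⟨τ, h1, h2⟩
    have hx : ∃ i : Fin (ℓ + 1), τ (Sum.inr (Sum.inl i)) = false := by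
      by_contra h
      push_neg at h
      have hsub : (Finset.univ.image
          (fun i : Fin (ℓ + 1) => (Sum.inr (Sum.inl i) : V ⊕ (Fin (ℓ + 1) ⊕ Fin (k - ℓ))))) ⊆
          ((Finset.univ.image (Sum.inr : (Fin (ℓ + 1) ⊕ Fin (k - ℓ)) →
            V ⊕ (Fin (ℓ + 1) ⊕ Fin (k - ℓ)))).filter (fun v => τ v = true)) := by
        intro a ha
        simp only [Finset.mem_image, Finset.mem_univ, true_and] at ha
        obtain ⟨i, rfl⟩ := ha
        simp only [Finset.mem_filter, Finset.mem_image, Finset.mem_univ, true_and]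
        exact ⟨⟨Sum.inl i, rfl⟩, by simpa using h i⟩
      have := Finset.card_le_card hsub
      rw [h2, Finset.card_image_of_injective] at this
      · simp at this
      · intro a b hab
        simpa using hab
    obtain ⟨i, hi⟩ := hx
    refine ⟨fun v => τ (Sum.inl v), fun c hc => ?_⟩
    have := h1 c hc i
    rw [Finset.filter_insert, if_neg (by simp [hi]), Finset.filter_image,
      Finset.card_image_of_injective _ Sum.inl_injective] at this
    simpa using this
end

section
/- In any assignment of S′ (as in the construction adding variables x₁,…,x_{ℓ+1} to each clause) making exactly ℓ variables true in every clause, all of x₁,…,x_{ℓ+1} receive the same truth value, and that value is false. -/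
/-!
If some `xᵢ` were true, the clause `c ∪ {xᵢ}` would leave only `ℓ - 1` true variables in `c`.
Each clause `c ∪ {xⱼ}` then needs `xⱼ` true as well, so the special clause would contain at
least the `ℓ + 1` true variables `x₁, …, x_{ℓ+1}`.
-/

open Finset

namespace Finset

variable {α : Type*} [DecidableEq α] (p : α → Prop) [DecidablePred p]

theorem card_filter_insert_of_notMem {a : α} {s : Finset α} (ha : a ∉ s) :
    #((insert a s).filter p) = #(s.filter p) + if p a then 1 else 0 := by
  rw [filter_insert]
  split_ifs
  · exact card_insert_of_notMem (fun h => ha (mem_of_mem_filter a h))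
  · rfl

variable {p}

theorem apply_iff_of_card_filter_insert_eq {a b : α} {s : Finset α} (ha : a ∉ s) (hb : b ∉ s)
    (h : #((insert a s).filter p) = #((insert b s).filter p)) : p a ↔ p b := by
  rw [card_filter_insert_of_notMem p ha, card_filter_insert_of_notMem p hb] at h
  split_ifs at h <;> simp_all

end Finset

theorem Fintype.card_le_card_filter_of_forall_inl {α β : Type*} [Fintype α] [Fintype β]
    {p : α ⊕ β → Prop} [DecidablePred p] (h : ∀ a, p (Sum.inl a)) :
    Fintype.card α ≤ #(univ.filter p) := by
  calc Fintype.card α = #(univ.map Function.Embedding.inl) := by simp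
    _ ≤ #(univ.filter p) := card_le_card fun x hx => by
      obtain ⟨a, -, rfl⟩ := mem_map.1 hx
      simpa using h a

theorem fresh_xs_false_general {V : Type*} [DecidableEq V] (k ℓ : ℕ)
    (C : Finset (Finset V)) (hC : C.Nonempty)
    (τ : V ⊕ (Fin (ℓ + 1) ⊕ Fin (k - ℓ)) → Bool)
    (hsat : ∀ c ∈ C, ∀ i : Fin (ℓ + 1),
      ((insert (Sum.inr (Sum.inl i) : V ⊕ (Fin (ℓ + 1) ⊕ Fin (k - ℓ)))
          (c.image Sum.inl)).filter (fun v => τ v = true)).card = ℓ)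
    (hspecial : ((Finset.univ.image (Sum.inr : (Fin (ℓ + 1) ⊕ Fin (k - ℓ)) →
        V ⊕ (Fin (ℓ + 1) ⊕ Fin (k - ℓ)))).filter (fun v => τ v = true)).card = ℓ) :
    ∀ i : Fin (ℓ + 1), τ (Sum.inr (Sum.inl i)) = false := by
  intro i
  by_contra hi
  rw [Bool.not_eq_false] at hi
  obtain ⟨c, hc⟩ := hC
  have hfresh : ∀ j : Fin (ℓ + 1),
      (Sum.inr (Sum.inl j) : V ⊕ (Fin (ℓ + 1) ⊕ Fin (k - ℓ))) ∉ c.image Sum.inl := by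
    simp
  have hall : ∀ j : Fin (ℓ + 1), τ (Sum.inr (Sum.inl j)) = true := fun j =>
    (apply_iff_of_card_filter_insert_eq (hfresh i) (hfresh j)
      ((hsat c hc i).trans (hsat c hc j).symm)).1 hi
  rw [filter_image, card_image_of_injective _ Sum.inr_injective] at hspecial
  have hle := Fintype.card_le_card_filter_of_forall_inl (p := fun z => τ (Sum.inr z) = true) hall
  simp only [Fintype.card_fin] at hle
  omega

/-- In any assignment of `S'` (with fresh variables `x₁,…,x_{ℓ+1}` added to each
clause and the extra clause `{x₁,…,x_{ℓ+1},y₁,…,y_{k-ℓ}}`) making exactly `ℓ` variables true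
in every clause, every `xᵢ` is assigned false (in particular all receive the same value). -/
theorem fresh_xs_false {V : Type*} [DecidableEq V] (k ℓ : ℕ)
    (hℓ : 1 ≤ ℓ) (hk : 2 * ℓ ≤ k)
    (C : Finset (Finset V)) (hC : C.Nonempty) (hcard : ∀ c ∈ C, c.card = k)
    (τ : V ⊕ (Fin (ℓ + 1) ⊕ Fin (k - ℓ)) → Bool)
    (hsat : ∀ c ∈ C, ∀ i : Fin (ℓ + 1),
      ((insert (Sum.inr (Sum.inl i) : V ⊕ (Fin (ℓ + 1) ⊕ Fin (k - ℓ)))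
          (c.image Sum.inl)).filter (fun v => τ v = true)).card = ℓ)
    (hspecial : ((Finset.univ.image (Sum.inr : (Fin (ℓ + 1) ⊕ Fin (k - ℓ)) →
        V ⊕ (Fin (ℓ + 1) ⊕ Fin (k - ℓ)))).filter (fun v => τ v = true)).card = ℓ) :
    ∀ i : Fin (ℓ + 1), τ (Sum.inr (Sum.inl i)) = false :=
  fresh_xs_false_general k ℓ C hC τ hsat hspecial
end

section
/- Let H be a digraph with maximum in-degree Δ⁻(H), and t ≥ 2. In the digraph F₀ consisting of vertices w, x, y, z, arcs w→x and z→y, and t·Δ⁻(H) − 1 additional vertices each with arcs to both x and y, every t-frugal homomorphism of F₀ to H maps w and z to the same vertex. -/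
open scoped Classical

/-- Vertices of the gadget `F₀`: `Sum.inl 0 = w`, `Sum.inl 1 = x`, `Sum.inl 2 = y`,
`Sum.inl 3 = z`, and `Sum.inr a` for the `m` common in-neighbours of `x` and `y`. -/
abbrev F0V (m : ℕ) := Fin 4 ⊕ Fin m

/-- Arcs of `F₀`: `w → x`, `z → y`, and `a → x`, `a → y` for every `a` in the extra set. -/
def F0Arc (m : ℕ) : F0V m → F0V m → Prop := fun p r =>
  match p, r with
  | Sum.inl i, Sum.inl j => (i = 0 ∧ j = 1) ∨ (i = 3 ∧ j = 2)
  | Sum.inr _, Sum.inl j => j = 1 ∨ j = 2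
  | _, _ => False

/-- The in-neighbourhood of `Sum.inl j` in `F₀`, as a finset. -/
noncomputable def F0In (m : ℕ) (j : Fin 4) : Finset (F0V m) :=
  Finset.univ.filter (fun p => F0Arc m p (Sum.inl j))

/-- The extra vertices of `F₀`, as a finset. -/
noncomputable def F0E (m : ℕ) : Finset (F0V m) :=
  (Finset.univ : Finset (Fin m)).image Sum.inr

lemma F0In_one (m : ℕ) : F0In m 1 = insert (Sum.inl 0) (F0E m) := by
  ext p
  rcases p with i | a
  · fin_cases i <;> simp only [F0In, Finset.mem_filter] <;> simp [F0E, F0Arc]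
  · simp only [F0In, Finset.mem_filter]; simp [F0E, F0Arc]

lemma F0In_two (m : ℕ) : F0In m 2 = insert (Sum.inl 3) (F0E m) := by
  ext p
  rcases p with i | a
  · fin_cases i <;> simp only [F0In, Finset.mem_filter] <;> simp [F0E, F0Arc]
  · simp only [F0In, Finset.mem_filter]; simp [F0E, F0Arc]

lemma F0E_not_mem (m : ℕ) (i : Fin 4) : (Sum.inl i : F0V m) ∉ F0E m := by
  simp [F0E]

lemma F0E_card (m : ℕ) : (F0E m).card = m := by
  rw [F0E, Finset.card_image_of_injective _ Sum.inr_injective, Finset.card_univ,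
    Fintype.card_fin]

/-- Key pigeonhole lemma: if `N` has `t*d` elements, all images under `g` lie in a set `S`
of size at most `d`, and each fiber has size at most `t`, then every nonempty fiber has
size exactly `t`. -/
lemma fiber_count_aux {V W : Type*} [Fintype V] (g : V → W) (S : Finset W) (t d : ℕ)
    (ht : 1 ≤ t) (hd : 1 ≤ d) (N : Finset V) (hS : S.card ≤ d)
    (himg : ∀ p ∈ N, g p ∈ S) (hcard : N.card = t * d)
    (hfib : ∀ h : W, (N.filter fun p => g p = h).card ≤ t)
    (p : V) (hp : p ∈ N) : (N.filter fun q => g q = g p).card = t := by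
  obtain ⟨d', rfl⟩ : ∃ d', d = d' + 1 := ⟨d - 1, by omega⟩
  have hsum := Finset.card_eq_sum_card_fiberwise himg
  rw [hcard] at hsum
  by_contra hne
  have h1 : (N.filter fun q => g q = g p).card ≤ t - 1 := by
    have := hfib (g p); omega
  have hgp : g p ∈ S := himg p hp
  have hsplit : (N.filter fun q => g q = g p).card
      + ∑ s ∈ S.erase (g p), (N.filter fun q => g q = s).card
      = ∑ s ∈ S, (N.filter fun q => g q = s).card :=
    Finset.add_sum_erase S (fun s => (N.filter fun q => g q = s).card) hgp
  have herase : ∑ s ∈ S.erase (g p), (N.filter fun q => g q = s).card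
      ≤ (S.erase (g p)).card * t := by
    calc ∑ s ∈ S.erase (g p), (N.filter fun q => g q = s).card
        ≤ ∑ _s ∈ S.erase (g p), t := Finset.sum_le_sum fun s _ => hfib s
      _ = (S.erase (g p)).card * t := by rw [Finset.sum_const, smul_eq_mul]
  have hec : (S.erase (g p)).card ≤ d' := by
    have := Finset.card_erase_of_mem hgp; omega
  have h2 : (S.erase (g p)).card * t ≤ d' * t := Nat.mul_le_mul_right t hec
  have : t * (d' + 1) ≤ (t - 1) + d' * t := by omega
  have hdt : t * (d' + 1) = d' * t + t := by ring
  omega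

/-- For a digraph `H` with maximum in-degree `d ≥ 1` and `t ≥ 2`, every
`t`-frugal homomorphism of `F₀` (with `t·d - 1` common in-neighbours of `x` and `y`)
to `H` maps `w` and `z` to the same vertex. -/
theorem F0_forces_equal {W : Type*} [Finite W] (B : W → W → Prop) (t d : ℕ)
    (ht : 2 ≤ t) (hd : 1 ≤ d)
    (hmax : IsGreatest (Set.range fun v : W => Nat.card {u : W // B u v}) d)
    (f : F0V (t * d - 1) → W)
    (hhom : ∀ p r, F0Arc (t * d - 1) p r → B (f p) (f r))
    (hfrugal : ∀ (v : F0V (t * d - 1)) (h : W),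
      Nat.card {p : F0V (t * d - 1) // F0Arc (t * d - 1) p v ∧ f p = h} ≤ t) :
    f (Sum.inl 0) = f (Sum.inl 3) := by
  cases nonempty_fintype W
  have htd : 2 ≤ t * d := le_trans ht (Nat.le_mul_of_pos_right t hd)
  have hNxcard : (F0In (t * d - 1) 1).card = t * d := by
    rw [F0In_one, Finset.card_insert_of_notMem (F0E_not_mem _ 0), F0E_card]; omega
  have hNycard : (F0In (t * d - 1) 2).card = t * d := by
    rw [F0In_two, Finset.card_insert_of_notMem (F0E_not_mem _ 3), F0E_card]; omega
  -- frugality in finset form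
  have hfrug : ∀ (v : F0V (t * d - 1)) (h : W),
      ((Finset.univ.filter (fun p => F0Arc (t * d - 1) p v)).filter
        fun p => f p = h).card ≤ t := by
    intro v h
    have := hfrugal v h
    rw [Nat.card_eq_fintype_card, Fintype.card_subtype] at this
    rwa [Finset.filter_filter]
  -- in-neighbourhood of any vertex of H has size at most d
  have hSd : ∀ v : W, (Finset.univ.filter fun u => B u v).card ≤ d := by
    intro v
    have := hmax.2 (Set.mem_range_self v)
    rwa [Nat.card_eq_fintype_card, Fintype.card_subtype] at this
  have hkey : ∀ (xy : Fin 4), (F0In (t * d - 1) xy).card = t * d →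
      ∀ p ∈ F0In (t * d - 1) xy,
        ((F0In (t * d - 1) xy).filter fun q => f q = f p).card = t := by
    intro xy hNc p hp
    refine fiber_count_aux f (Finset.univ.filter fun u => B u (f (Sum.inl xy))) t d
      (by omega) hd _ (hSd _) ?_ hNc ?_ p hp
    · intro q hq
      rw [F0In, Finset.mem_filter] at hq
      exact Finset.mem_filter.2 ⟨Finset.mem_univ _, hhom _ _ hq.2⟩
    · intro h; rw [F0In]; exact hfrug _ h
  -- the fiber of f w among in-neighbours of x has size t
  have hwx : (Sum.inl 0 : F0V (t * d - 1)) ∈ F0In (t * d - 1) 1 := by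
    rw [F0In_one]; exact Finset.mem_insert_self _ _
  have hFx : ((F0In (t * d - 1) 1).filter fun q => f q = f (Sum.inl 0)).card = t :=
    hkey 1 hNxcard _ hwx
  -- find an extra vertex mapped to f w
  have h2le : 2 ≤ ((F0In (t * d - 1) 1).filter fun q => f q = f (Sum.inl 0)).card := by
    omega
  obtain ⟨q, hq, hqne⟩ : ∃ q ∈ (F0In (t * d - 1) 1).filter fun q => f q = f (Sum.inl 0),
      q ≠ Sum.inl 0 := by
    by_contra hcon
    push_neg at hcon
    have hsub : ((F0In (t * d - 1) 1).filter fun q => f q = f (Sum.inl 0))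
        ⊆ {Sum.inl 0} := by
      intro q hq; simp [hcon q hq]
    have := Finset.card_le_card hsub
    simp at this; omega
  rw [Finset.mem_filter] at hq
  obtain ⟨a, rfl⟩ : ∃ a : Fin (t * d - 1), q = Sum.inr a := by
    rcases q with i | a
    · rw [F0In_one, Finset.mem_insert] at hq
      rcases hq.1 with h | h
      · exact absurd h hqne
      · exact absurd h (F0E_not_mem _ i)
    · exact ⟨a, rfl⟩
  -- Sum.inr a is an in-neighbour of y mapped to f w
  have hay : (Sum.inr a : F0V (t * d - 1)) ∈ F0In (t * d - 1) 2 := by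
    rw [F0In_two]
    exact Finset.mem_insert_of_mem (Finset.mem_image_of_mem _ (Finset.mem_univ a))
  have hFy : ((F0In (t * d - 1) 2).filter fun q => f q = f (Sum.inl 0)).card = t := by
    have := hkey 2 hNycard _ hay
    rwa [hq.2] at this
  -- conclude
  by_contra hne
  have hFyE : ((F0In (t * d - 1) 2).filter fun q => f q = f (Sum.inl 0))
      = ((F0In (t * d - 1) 1).filter fun q => f q = f (Sum.inl 0)).erase (Sum.inl 0) := by
    ext r
    rw [F0In_one, F0In_two, Finset.mem_erase, Finset.mem_filter, Finset.mem_filter,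
      Finset.mem_insert, Finset.mem_insert]
    constructor
    · rintro ⟨hr | hr, hfr⟩
      · subst hr; exact absurd hfr.symm hne
      · exact ⟨fun h => F0E_not_mem _ 0 (h ▸ hr), Or.inr hr, hfr⟩
    · rintro ⟨hrne, hr | hr, hfr⟩
      · exact absurd hr hrne
      · exact ⟨Or.inr hr, hfr⟩
  have hmem : (Sum.inl 0 : F0V (t * d - 1))
      ∈ (F0In (t * d - 1) 1).filter fun q => f q = f (Sum.inl 0) :=
    Finset.mem_filter.2 ⟨hwx, rfl⟩
  have := Finset.card_erase_of_mem hmem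
  rw [← hFyE, hFy, hFx] at this
  omega
end

section
/- Let H be a digraph in which the vertices are partitioned into two classes by a 2-colouring h such that any two distinct vertices of H sharing a common out-neighbour of in-degree 2 receive different colours under h. Suppose x is a vertex of H of in-degree exactly 2 with in-neighbours y and z, and Δ⁻(H) = 2. Let S be a monotone t-in-2t-SAT instance and G the digraph with a vertex u_ℓ for each variable ℓ, a vertex v_c for each clause c, and an arc u_ℓ → v_c whenever ℓ ∈ c. Then G has a t-frugal homomorphism to H if and only if S has an assignment with exactly t true variables in every clause. -/
/-!
A `t`-frugal homomorphism sends the `2t` literals of a clause into the in-neighbourhood of the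
image of the clause vertex, at most `t` of them to each in-neighbour. Since in-degrees are at
most `2`, and two in-neighbours of a vertex of in-degree `2` have different colours under `h`,
each colour class receives at most `t`, hence exactly `t`, literals of every clause: reading off
the colour of the image of each variable is a solution. Conversely, a solution is turned into a
homomorphism by sending true variables to `y`, false ones to `z` and all clauses to `x`.
-/

open Finset

section ClauseGraph

variable {V W : Type*} [DecidableEq W]

def clauseArc (C : Finset (Finset V)) (a b : V ⊕ Finset V) : Prop :=
  ∃ ℓ c, a = Sum.inl ℓ ∧ b = Sum.inr c ∧ c ∈ C ∧ ℓ ∈ c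

def IsFrugal {α β : Type*} (A : α → α → Prop) (t : ℕ) (f : α → β) : Prop :=
  ∀ b w, Nat.card {a // A a b ∧ f a = w} ≤ t

lemma card_clauseArc_fiber {C : Finset (Finset V)} {c : Finset V} (hc : c ∈ C)
    (f : V ⊕ Finset V → W) (w : W) :
    Nat.card {a // clauseArc C a (Sum.inr c) ∧ f a = w} =
      #(c.filter fun ℓ => f (Sum.inl ℓ) = w) := by
  have hfiber : {a | clauseArc C a (Sum.inr c) ∧ f a = w} =
      Sum.inl '' ↑(c.filter fun ℓ => f (Sum.inl ℓ) = w) := by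
    ext a
    simp only [clauseArc, Set.mem_ofPred_eq, Set.mem_image, coe_filter, Sum.inr.injEq]
    constructor
    · rintro ⟨⟨ℓ, _, rfl, rfl, -, hℓ⟩, hw⟩
      exact ⟨ℓ, ⟨hℓ, hw⟩, rfl⟩
    · rintro ⟨ℓ, ⟨hℓ, hw⟩, rfl⟩
      exact ⟨⟨ℓ, c, rfl, rfl, hc, hℓ⟩, hw⟩
  rw [← Set.ncard_coe_finset, ← Set.ncard_image_of_injective _ Sum.inl_injective, ← hfiber,
    ← Nat.card_coe_set_eq]
  rfl

lemma isFrugal_clauseArc_iff {C : Finset (Finset V)} {t : ℕ} {f : V ⊕ Finset V → W} :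
    IsFrugal (clauseArc C) t f ↔ ∀ c ∈ C, ∀ w, #(c.filter fun ℓ => f (Sum.inl ℓ) = w) ≤ t := by
  refine ⟨fun hf c hc w => card_clauseArc_fiber hc f w ▸ hf (Sum.inr c) w, fun H b w => ?_⟩
  by_cases hb : ∃ c ∈ C, b = Sum.inr c
  · obtain ⟨c, hc, rfl⟩ := hb
    exact card_clauseArc_fiber hc f w ▸ H c hc w
  · have : IsEmpty {a // clauseArc C a b ∧ f a = w} :=
      ⟨fun ⟨_, ⟨_, c, _, hbc, hc, _⟩, _⟩ => hb ⟨c, hc, hbc⟩⟩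
    simp

end ClauseGraph

section Clause

variable {V W : Type*} [DecidableEq W] {c : Finset V} {t : ℕ}

lemma card_filter_colour_le {g : V → W} {col : W → Bool}
    (hsep : ∀ ℓ ∈ c, ∀ ℓ' ∈ c, col (g ℓ) = col (g ℓ') → g ℓ = g ℓ')
    (hfrug : ∀ w, #(c.filter fun ℓ => g ℓ = w) ≤ t) (b : Bool) :
    #(c.filter fun ℓ => col (g ℓ) = b) ≤ t := by
  rcases (c.filter fun ℓ => col (g ℓ) = b).eq_empty_or_nonempty with hempty | ⟨ℓ₀, hℓ₀⟩
  · simp [hempty]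
  · rw [mem_filter] at hℓ₀
    refine (card_le_card (monotone_filter_right c fun ℓ hℓ hb => ?_)).trans (hfrug (g ℓ₀))
    exact hsep ℓ hℓ ℓ₀ hℓ₀.1 (hb.trans hℓ₀.2.symm)

lemma card_filter_colour_eq (hc : #c = 2 * t) {g : V → W} {col : W → Bool}
    (hsep : ∀ ℓ ∈ c, ∀ ℓ' ∈ c, col (g ℓ) = col (g ℓ') → g ℓ = g ℓ')
    (hfrug : ∀ w, #(c.filter fun ℓ => g ℓ = w) ≤ t) :
    #(c.filter fun ℓ => col (g ℓ) = true) = t := by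
  have hsplit := card_filter_add_card_filter_not (s := c) fun ℓ => col (g ℓ) = true
  simp only [Bool.not_eq_true] at hsplit
  have := card_filter_colour_le hsep hfrug true
  have := card_filter_colour_le hsep hfrug false
  omega

lemma card_filter_ite_eq_le (hc : #c = 2 * t) {σ : V → Bool}
    (hσ : #(c.filter fun ℓ => σ ℓ = true) = t) {y z : W} (hyz : y ≠ z) (w : W) :
    #(c.filter fun ℓ => (if σ ℓ then y else z) = w) ≤ t := by
  have hsplit := card_filter_add_card_filter_not (s := c) fun ℓ => σ ℓ = true
  by_cases hwy : w = y
  · subst hwy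
    refine (card_le_card (monotone_filter_right c fun ℓ _ hℓ => ?_)).trans hσ.le
    by_contra hσℓ
    exact hyz (by simpa [hσℓ] using hℓ.symm)
  · refine (card_le_card (monotone_filter_right c (q := fun ℓ => ¬σ ℓ = true)
      fun ℓ _ hℓ hσℓ => ?_)).trans (by omega)
    exact hwy (by simpa [hσℓ] using hℓ.symm)

end Clause

lemma eq_of_inNeighbour_of_colour_eq {W : Type*} [Finite W] {B : W → W → Prop} {h : W → Bool}
    (hcol : ∀ u v : W, u ≠ v →
      (∃ s, B u s ∧ B v s ∧ Nat.card {p : W // B p s} = 2) → h u ≠ h v)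
    (hΔ : ∀ v : W, Nat.card {p : W // B p v} ≤ 2)
    {s u v : W} (hu : B u s) (hv : B v s) (huv : h u = h v) : u = v := by
  by_contra hne
  refine hcol u v hne ⟨s, hu, hv, le_antisymm (hΔ s) ?_⟩ huv
  calc 2 = ({u, v} : Set W).ncard := (Set.ncard_pair hne).symm
    _ ≤ {p | B p s}.ncard :=
      Set.ncard_le_ncard (by simp [Set.insert_subset_iff, hu, hv]) (Set.toFinite _)
    _ = Nat.card {p // B p s} := (Nat.card_coe_set_eq _).symm

theorem frugal_iff_t_in_2t_general {V W : Type*} [Fintype V] [DecidableEq V] [Finite W]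
    (B : W → W → Prop) (t : ℕ)
    (C : Finset (Finset V)) (hcard : ∀ c ∈ C, c.card = 2 * t)
    (h : W → Bool)
    (hcol : ∀ u v : W, u ≠ v →
      (∃ s, B u s ∧ B v s ∧ Nat.card {p : W // B p s} = 2) → h u ≠ h v)
    (x y z : W) (hyx : B y x) (hzx : B z x) (hyz : y ≠ z)
    (hΔ : ∀ v : W, Nat.card {p : W // B p v} ≤ 2) :
    (∃ f : V ⊕ Finset V → W,
      (∀ a b : V ⊕ Finset V,
        (∃ ℓ c, a = Sum.inl ℓ ∧ b = Sum.inr c ∧ c ∈ C ∧ ℓ ∈ c) → B (f a) (f b)) ∧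
      (∀ (b : V ⊕ Finset V) (w : W),
        Nat.card {a : V ⊕ Finset V //
          (∃ ℓ c, a = Sum.inl ℓ ∧ b = Sum.inr c ∧ c ∈ C ∧ ℓ ∈ c) ∧ f a = w} ≤ t)) ↔
    (∃ σ : V → Bool, ∀ c ∈ C, (c.filter (fun v => σ v = true)).card = t) := by
  classical
  constructor
  · rintro ⟨f, hhom, hfrug⟩
    have hfrug' := isFrugal_clauseArc_iff.mp hfrug
    refine ⟨fun ℓ => h (f (Sum.inl ℓ)), fun c hc => ?_⟩
    have hin : ∀ ℓ ∈ c, B (f (Sum.inl ℓ)) (f (Sum.inr c)) :=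
      fun ℓ hℓ => hhom _ _ ⟨ℓ, c, rfl, rfl, hc, hℓ⟩
    exact card_filter_colour_eq (hcard c hc)
      (fun ℓ hℓ ℓ' hℓ' => eq_of_inNeighbour_of_colour_eq hcol hΔ (hin ℓ hℓ) (hin ℓ' hℓ'))
      (hfrug' c hc)
  · rintro ⟨σ, hσ⟩
    refine ⟨Sum.elim (fun ℓ => if σ ℓ then y else z) (fun _ => x), ?_, ?_⟩
    · rintro _ _ ⟨ℓ, c, rfl, rfl, -, -⟩
      simp only [Sum.elim_inl, Sum.elim_inr]
      split <;> assumption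
    · exact isFrugal_clauseArc_iff.mpr fun c hc =>
        card_filter_ite_eq_le (hcard c hc) (hσ c hc) hyz

/-- `H` (arcs `B`) has maximum in-degree 2, witnessed by a vertex `x` of
in-degree exactly 2 with in-neighbours `y ≠ z`, and admits a 2-colouring `h` such that
distinct vertices sharing a common out-neighbour of in-degree 2 get different colours.
`S` is a monotone t-in-2t-SAT instance with clause family `C` (each clause of size `2t`),
and `G` is the digraph on `V ⊕ Finset V` with an arc `Sum.inl ℓ → Sum.inr c` exactly when
`c ∈ C` and `ℓ ∈ c`.  Then `G` has a `t`-frugal homomorphism to `H` iff `S` has an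
assignment with exactly `t` true variables in every clause. -/
theorem frugal_iff_t_in_2t {V W : Type*} [Fintype V] [DecidableEq V] [Finite W]
    (B : W → W → Prop) (t : ℕ) (ht : 1 ≤ t)
    (C : Finset (Finset V)) (hcard : ∀ c ∈ C, c.card = 2 * t)
    (h : W → Bool)
    (hcol : ∀ u v : W, u ≠ v →
      (∃ s, B u s ∧ B v s ∧ Nat.card {p : W // B p s} = 2) → h u ≠ h v)
    (x y z : W) (hyx : B y x) (hzx : B z x) (hyz : y ≠ z)
    (hx2 : Nat.card {p : W // B p x} = 2)
    (hΔ : ∀ v : W, Nat.card {p : W // B p v} ≤ 2) :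
    (∃ f : V ⊕ Finset V → W,
      (∀ a b : V ⊕ Finset V,
        (∃ ℓ c, a = Sum.inl ℓ ∧ b = Sum.inr c ∧ c ∈ C ∧ ℓ ∈ c) → B (f a) (f b)) ∧
      (∀ (b : V ⊕ Finset V) (w : W),
        Nat.card {a : V ⊕ Finset V //
          (∃ ℓ c, a = Sum.inl ℓ ∧ b = Sum.inr c ∧ c ∈ C ∧ ℓ ∈ c) ∧ f a = w} ≤ t)) ↔
    (∃ σ : V → Bool, ∀ c ∈ C, (c.filter (fun v => σ v = true)).card = t) :=
  frugal_iff_t_in_2t_general B t C hcard h hcol x y z hyx hzx hyz hΔ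
end
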